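/- arXiv:2308.16720 — 2 statements merged into one kernel-verified Lean document; each statement's English description precedes it below -/
import Mathlib

section
/- Let H be a real Hilbert space, r ∈ ℕ, and let u, v : Fin r → H be orthonormal families whose Gram matrix is diagonal: ⟨u i, v j⟩ = 0 for i ≠ j and ⟨u i, v i⟩ = σ i with 0 ≤ σ i ≤ 1. Let P_U and P_V be the orthogonal projections of H onto the spans of {u i} and {v i}. Then for every index i : Fin r and all real numbers x, y, one has ‖(P_U − P_V)(x • u i + y • v i)‖² = (1 − (σ i)²) · ‖x • u i + y • v i‖². -/
/-!
The diagonal Gram matrix makes `w = x • u i + y • v i` orthogonal to every `u j` and `v j` with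
`j ≠ i`, so `P_U` and `P_V` act on `w` as the rank-one projections onto `u i` and `v i`. What is
left is an identity of quadratic forms in `x, y` on the plane spanned by `u i, v i`, whose Gram
matrix is `[[1, σ i], [σ i, 1]]`.
-/

open scoped InnerProductSpace

/-- The orthogonal projection of a real Hilbert space onto the (finite-dimensional, hence
complete) span of a finite family, viewed as a continuous linear map `H →L[ℝ] H`. -/
noncomputable def spanProj {H : Type*} [NormedAddCommGroup H] [InnerProductSpace ℝ H]
    [CompleteSpace H] {r : ℕ} (u : Fin r → H) : H →L[ℝ] H :=
  haveI : FiniteDimensional ℝ (Submodule.span ℝ (Set.range u)) :=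
    FiniteDimensional.span_of_finite ℝ (Set.finite_range u)
  (Submodule.span ℝ (Set.range u)).subtypeL.comp
    (Submodule.orthogonalProjectionOnto (Submodule.span ℝ (Set.range u)))

section

variable {H : Type*} [NormedAddCommGroup H] [InnerProductSpace ℝ H]

theorem norm_smul_add_smul_sq_of_norm_eq_one {e f : H} (he : ‖e‖ = 1) (hf : ‖f‖ = 1)
    (a b : ℝ) : ‖a • e + b • f‖ ^ 2 = a ^ 2 + 2 * a * b * ⟪e, f⟫_ℝ + b ^ 2 := by
  rw [norm_add_sq_real, norm_smul, norm_smul, real_inner_smul_left, real_inner_smul_right,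
    he, hf, Real.norm_eq_abs, Real.norm_eq_abs]
  simp only [mul_one, sq_abs]
  ring

variable [CompleteSpace H] {r : ℕ} {u : Fin r → H}

theorem spanProj_eq_of_mem_of_inner_eq_zero {w m : H}
    (hm : m ∈ Submodule.span ℝ (Set.range u)) (h : ∀ j, ⟪w - m, u j⟫_ℝ = 0) :
    spanProj u w = m := by
  have : FiniteDimensional ℝ (Submodule.span ℝ (Set.range u)) :=
    FiniteDimensional.span_of_finite ℝ (Set.finite_range u)
  have hperp : ∀ z ∈ Submodule.span ℝ (Set.range u), ⟪w - m, z⟫_ℝ = 0 := fun z hz =>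
    (Submodule.isOrtho_span.mpr (by simpa using h)).inner_eq
      (Submodule.mem_span_singleton_self _) hz
  exact Submodule.eq_starProjection_of_mem_of_inner_eq_zero hm hperp

theorem Orthonormal.spanProj_eq_smul (hu : Orthonormal ℝ u) {i : Fin r} {w : H}
    (hw : ∀ j, j ≠ i → ⟪u j, w⟫_ℝ = 0) : spanProj u w = ⟪u i, w⟫_ℝ • u i := by
  refine spanProj_eq_of_mem_of_inner_eq_zero
    (Submodule.smul_mem _ _ (Submodule.subset_span ⟨i, rfl⟩)) fun j => ?_
  rw [inner_sub_left, real_inner_smul_left]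
  rcases eq_or_ne j i with rfl | hji
  · rw [real_inner_self_eq_norm_sq, hu.1, one_pow, mul_one, real_inner_comm, sub_self]
  · rw [real_inner_comm, hw j hji, hu.2 hji.symm, mul_zero, sub_self]

end

theorem stmt2_general {H : Type*} [NormedAddCommGroup H] [InnerProductSpace ℝ H] [CompleteSpace H]
    {r : ℕ} (u v : Fin r → H) (hu : Orthonormal ℝ u) (hv : Orthonormal ℝ v)
    (σ : Fin r → ℝ)
    (hoff : ∀ i j, i ≠ j → ⟪u i, v j⟫_ℝ = 0)
    (hdiag : ∀ i, ⟪u i, v i⟫_ℝ = σ i) :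
    ∀ (i : Fin r) (x y : ℝ),
      ‖(spanProj u - spanProj v) (x • u i + y • v i)‖ ^ 2
        = (1 - σ i ^ 2) * ‖x • u i + y • v i‖ ^ 2 := by
  intro i x y
  have hPu : spanProj u (x • u i + y • v i) = (x + y * σ i) • u i := by
    rw [hu.spanProj_eq_smul (i := i) fun j hj => by
      simp [inner_add_right, real_inner_smul_right, hu.2 hj, hoff j i hj]]
    simp [inner_add_right, real_inner_smul_right, hu.1, hdiag]
  have hPv : spanProj v (x • u i + y • v i) = (x * σ i + y) • v i := by
    rw [hv.spanProj_eq_smul (i := i) fun j hj => by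
      simp [inner_add_right, real_inner_smul_right, hv.2 hj, real_inner_comm (u i),
        hoff i j hj.symm]]
    simp [inner_add_right, real_inner_smul_right, hv.1,
      real_inner_comm (u i), hdiag]
  rw [sub_apply, hPu, hPv, sub_eq_add_neg, ← neg_smul,
    norm_smul_add_smul_sq_of_norm_eq_one (hu.1 i) (hv.1 i),
    norm_smul_add_smul_sq_of_norm_eq_one (hu.1 i) (hv.1 i), hdiag]
  ring

/-- If `u, v` are orthonormal families in a real Hilbert space with diagonal Gram matrix
`⟪u i, v j⟫ = δ_{ij} σ i`, `0 ≤ σ i ≤ 1`, then for every `i` and all reals `x, y`,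
`‖(P_U - P_V)(x • u i + y • v i)‖² = (1 - (σ i)²) ‖x • u i + y • v i‖²`. -/
theorem stmt2 {H : Type*} [NormedAddCommGroup H] [InnerProductSpace ℝ H] [CompleteSpace H]
    {r : ℕ} (u v : Fin r → H) (hu : Orthonormal ℝ u) (hv : Orthonormal ℝ v)
    (σ : Fin r → ℝ) (hσ0 : ∀ i, 0 ≤ σ i) (hσ1 : ∀ i, σ i ≤ 1)
    (hoff : ∀ i j, i ≠ j → ⟪u i, v j⟫_ℝ = 0)
    (hdiag : ∀ i, ⟪u i, v i⟫_ℝ = σ i) :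
    ∀ (i : Fin r) (x y : ℝ),
      ‖(spanProj u - spanProj v) (x • u i + y • v i)‖ ^ 2
        = (1 - σ i ^ 2) * ‖x • u i + y • v i‖ ^ 2 :=
  stmt2_general u v hu hv σ hoff hdiag
end

section
/- In the Tucker setting below, let X ∈ M, fix μ : Fin d, and suppose there are an orthonormal family (w_k)_{k ∈ Fin (r μ)} in ℓ²(ℕ; ℝ) and a pairwise orthogonal family (z_k)_{k ∈ Fin (r μ)} in the ℓ²-space of real functions on {ν : Fin d // ν ≠ μ} → ℕ such that X(i) = ∑_k w_k(i μ) · z_k(i restricted to indices ν ≠ μ) for every i : Fin d → ℕ. Fix an index k₀ : Fin (r μ) and define X̃ ∈ H by X̃(i) = ∑_{k ≠ k₀} w_k(i μ) · z_k(i restricted to indices ν ≠ μ). Then ‖X − X̃‖ = ‖z_{k₀}‖, X̃ lies in the weak closure of M, and X̃ ∉ M. -/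
/-!
Write `E = w_{k₀} ⊗ z_{k₀}`; then `X - X̃ = E` and `‖E‖ = ‖w_{k₀}‖ ‖z_{k₀}‖ = ‖z_{k₀}‖`.

If `X = Ψ(C, u)`, the mode-`μ` fibres of `X` are `∑ₖ z_k(i') w_k`, with `w_{k₀}`-coordinate
`z_{k₀}(i')`. So replacing `u^μ` by its image under the invertible map
`x ↦ x + s ⟪w_{k₀}, x⟫ w_{k₀}` (`s ≠ -1`) turns `X` into `X + s E`, and `X̃ + t E ∈ M` for every
`t ≠ 0`. Letting `t → 0` puts `X̃` in the norm closure of `M`, hence in its weak closure.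

For `Ψ(C, u) ∈ M`, the mode-`μ` fibres span the `r_μ`-dimensional span of `u^μ`: their
coordinates are the columns of `C_(μ) (⊗_{ν ≠ μ} u^ν)ᵀ`, whose rows are independent because
`C_(μ)` has full row rank and tensor products of independent families are independent. The
fibres of `X̃` lie in the span of the `r_μ - 1` vectors `w_k`, `k ≠ k₀`, so `X̃ ∉ M`.
-/

open scoped InnerProductSpace ENNReal

namespace Tucker

variable (d : ℕ) (r : Fin d → ℕ)

/-- Core tensor space with the Frobenius (Euclidean) norm. -/
abbrev Ec := EuclideanSpace ℝ (∀ μ : Fin d, Fin (r μ))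

/-- `ℓ²(ℕ; ℝ)`. -/
noncomputable abbrev l2N := lp (fun _ : ℕ => ℝ) 2

/-- The ambient space `H = ℓ²(ℕ^d; ℝ)`. -/
noncomputable abbrev Hsp := lp (fun _ : Fin d → ℕ => ℝ) 2

/-- The `μ`-th matricization of a core tensor. -/
def matricize (μ : Fin d) (C : Ec d r) :
    Matrix (Fin (r μ)) (∀ ν : {ν : Fin d // ν ≠ μ}, Fin (r ν.1)) ℝ :=
  Matrix.of fun a b =>
    C fun ν => if h : ν = μ then Fin.cast (congrArg r h).symm a else b ⟨ν, h⟩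

/-- Full multilinear rank. -/
def fullRank (C : Ec d r) : Prop := ∀ μ : Fin d, (matricize d r μ C).rank = r μ

/-- Multilinear multiplication `C ×₁ T¹ ⋯ ×_d T^d`. -/
def mulMul (T : ∀ μ : Fin d, Matrix (Fin (r μ)) (Fin (r μ)) ℝ) (C : Ec d r) : Ec d r :=
  WithLp.toLp 2 fun k => ∑ j : ∀ μ : Fin d, Fin (r μ), (∏ μ, T μ (k μ) (j μ)) * C j

/-- Gram matrix of a finite family in `ℓ²(ℕ; ℝ)`. -/
noncomputable def gram {n : ℕ} (f : Fin n → l2N) : Matrix (Fin n) (Fin n) ℝ :=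
  Matrix.of fun a b => ⟪f a, f b⟫_ℝ

open Classical in
/-- The tensor `Ψ(C, u)` with entries `i ↦ ∑_k C k ∏ μ, u^μ_{k μ} (i μ)`. -/
noncomputable def Psi (C : Ec d r) (u : ∀ μ : Fin d, Fin (r μ) → l2N) : Hsp d :=
  if h : Memℓp (fun i : Fin d → ℕ =>
      ∑ k : ∀ μ : Fin d, Fin (r μ), C k * ∏ μ, (u μ (k μ) : ℕ → ℝ) (i μ)) 2
  then ⟨_, h⟩ else 0

/-- The low-rank manifold `M`. -/
def Mset (Mc : Set (Ec d r)) : Set (Hsp d) :=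
  {X | ∃ C ∈ Mc, ∃ u : ∀ μ : Fin d, Fin (r μ) → l2N,
    (∀ μ, IsUnit (gram (u μ))) ∧ X = Psi d r C u}

/-- The identity map into the weak topology. -/
def toWeak : Hsp d → WeakSpace ℝ (Hsp d) := fun x => x

/-- The weak closure of a subset of `H`. -/
def weakClosure (S : Set (Hsp d)) : Set (Hsp d) :=
  toWeak d ⁻¹' closure (toWeak d '' S)


/-- The `ℓ²`-space over the complementary index set. -/
noncomputable abbrev l2C (μ : Fin d) := lp (fun _ : {ν : Fin d // ν ≠ μ} → ℕ => ℝ) 2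

end Tucker

open Set Submodule

section PiSplitAt
variable {α : Type*} [DecidableEq α] (i : α) (β : α → Type*)

@[simp] theorem Equiv.piSplitAt_symm_apply_self (p : β i × ∀ j : {j // j ≠ i}, β j) :
    (Equiv.piSplitAt i β).symm p i = p.1 :=
  congrArg Prod.fst ((Equiv.piSplitAt i β).apply_symm_apply p)

@[simp] theorem Equiv.piSplitAt_symm_apply_coe (p : β i × ∀ j : {j // j ≠ i}, β j)
    (j : {j // j ≠ i}) :
    (Equiv.piSplitAt i β).symm p j = p.2 j :=
  congrFun (congrArg Prod.snd ((Equiv.piSplitAt i β).apply_symm_apply p)) j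

end PiSplitAt

section LpTwo
variable {α β γ : Type*}

theorem memℓp_two_iff {f : α → ℝ} : Memℓp f 2 ↔ Summable fun a => f a ^ 2 := by
  rw [memℓp_gen_iff (by norm_num)]
  simp [sq_abs]

theorem lp.hasSum_sq (f : lp (fun _ : α => ℝ) 2) : HasSum (fun a => f a ^ 2) (‖f‖ ^ 2) := by
  simpa [Real.rpow_two, sq_abs] using lp.hasSum_norm (by norm_num : 0 < (2 : ENNReal).toReal) f

theorem lp.coeFn_sum_smul_apply {ι : Type*} (s : Finset ι) (c : ι → ℝ)
    (f : ι → lp (fun _ : α => ℝ) 2) (a : α) :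
    (∑ k ∈ s, c k • f k : lp (fun _ : α => ℝ) 2) a = ∑ k ∈ s, c k * f k a := by
  rw [lp.coeFn_sum]
  simp only [Finset.sum_apply, lp.coeFn_smul, Pi.smul_apply, smul_eq_mul]

theorem lp.linearIndependent_coe {ι : Type*} [Fintype ι] {v : ι → lp (fun _ : α => ℝ) 2}
    (hv : LinearIndependent ℝ v) : LinearIndependent ℝ fun k => (v k : α → ℝ) := by
  refine Fintype.linearIndependent_iff.2 fun c hc => Fintype.linearIndependent_iff.1 hv c ?_
  refine lp.ext ?_
  rw [lp.coeFn_sum]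
  simp only [lp.coeFn_smul, lp.coeFn_zero]
  exact hc

variable (e : γ ≃ α × β) (f : lp (fun _ : α => ℝ) 2) (g : lp (fun _ : β => ℝ) 2)

theorem hasSum_sq_mul_comp_equiv :
    HasSum (fun c => (f (e c).1 * g (e c).2) ^ 2) (‖f‖ ^ 2 * ‖g‖ ^ 2) := by
  have hf := lp.hasSum_sq f
  have hg := lp.hasSum_sq g
  have := hf.mul hg (hf.summable.mul_of_nonneg hg.summable (fun _ => sq_nonneg _)
    fun _ => sq_nonneg _)
  simp only [mul_pow]
  exact (e.hasSum_iff (f := fun p : α × β => f p.1 ^ 2 * g p.2 ^ 2)).2 this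

noncomputable def lpTensor : lp (fun _ : γ => ℝ) 2 :=
  ⟨fun c => f (e c).1 * g (e c).2,
    memℓp_two_iff.2 (hasSum_sq_mul_comp_equiv e f g).summable⟩

@[simp] theorem lpTensor_apply (c : γ) : lpTensor e f g c = f (e c).1 * g (e c).2 := rfl

theorem norm_lpTensor : ‖lpTensor e f g‖ = ‖f‖ * ‖g‖ := by
  have := (lp.hasSum_sq (lpTensor e f g)).unique (hasSum_sq_mul_comp_equiv e f g)
  rw [← mul_pow] at this
  exact (sq_eq_sq₀ (norm_nonneg _) (by positivity)).1 this

end LpTwo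

theorem memℓp_two_prod {ι : Type*} [Fintype ι] [DecidableEq ι] {A : ι → Type*}
    (g : ∀ ν, lp (fun _ : A ν => ℝ) 2) : Memℓp (fun x : ∀ ν, A ν => ∏ ν, g ν (x ν)) 2 := by
  rcases isEmpty_or_nonempty ι with hι | ⟨⟨ν₀⟩⟩
  · exact memℓp_two_iff.2 Summable.of_finite
  · have ih := memℓp_two_prod fun ν : {ν // ν ≠ ν₀} => g ν
    convert lp.memℓp (lpTensor (Equiv.piSplitAt ν₀ A) (g ν₀) ⟨_, ih⟩) using 1
    funext x
    simp [Fintype.prod_eq_mul_prod_subtype_ne _ ν₀]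
termination_by Fintype.card ι
decreasing_by exact Fintype.card_subtype_lt (x := ν₀) (by simp)

section LinearIndependentProd
variable {R : Type*} [CommRing R]

theorem LinearIndependent.mul_prod {κ κ' α β : Type*} [Fintype κ] [Fintype κ']
    {f : κ → α → R} {g : κ' → β → R} (hf : LinearIndependent R f) (hg : LinearIndependent R g) :
    LinearIndependent R fun (p : κ × κ') (x : α × β) => f p.1 x.1 * g p.2 x.2 := by
  rw [Fintype.linearIndependent_iff] at hf hg ⊢
  intro c hc ⟨a, b⟩
  have hrow : ∀ a y, ∑ b, c (a, b) * g b y = 0 := by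
    intro a y
    refine hf (fun a => ∑ b, c (a, b) * g b y) (funext fun x => ?_) a
    have := congrFun hc (x, y)
    simp only [Fintype.sum_prod_type, Finset.sum_apply, Pi.smul_apply, smul_eq_mul,
      Pi.zero_apply] at this
    simp only [Finset.sum_apply, Pi.smul_apply, smul_eq_mul, Finset.sum_mul, Pi.zero_apply]
    rw [← this]
    exact Finset.sum_congr rfl fun a _ => Finset.sum_congr rfl fun b _ => by ring
  exact hg (fun b => c (a, b)) (funext fun y => by simpa using hrow a y) b

theorem LinearIndependent.pi_prod {ι : Type*} [Fintype ι] [DecidableEq ι]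
    {κ α : ι → Type*} [∀ ν, Fintype (κ ν)] {g : ∀ ν, κ ν → α ν → R}
    (hg : ∀ ν, LinearIndependent R (g ν)) :
    LinearIndependent R fun (b : ∀ ν, κ ν) (x : ∀ ν, α ν) => ∏ ν, g ν (b ν) (x ν) := by
  rcases isEmpty_or_nonempty ι with hι | ⟨⟨ν₀⟩⟩
  · rw [Fintype.linearIndependent_iff]
    intro c hc b
    simpa [Unique.eq_default b] using congrFun hc default
  · have ih := LinearIndependent.pi_prod fun ν : {ν // ν ≠ ν₀} => hg ν
    have := (((hg ν₀).mul_prod ih).comp _ (Equiv.piSplitAt ν₀ κ).injective).map'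
      (LinearMap.funLeft R R (Equiv.piSplitAt ν₀ α))
      (LinearMap.ker_eq_bot.2 (LinearMap.funLeft_injective_of_surjective _ _ _
        (Equiv.piSplitAt ν₀ α).surjective))
    simp_rw [Fintype.prod_eq_mul_prod_subtype_ne _ ν₀]
    exact this
termination_by Fintype.card ι
decreasing_by exact Fintype.card_subtype_lt (x := ν₀) (by simp)

end LinearIndependentProd

theorem Matrix.span_range_col_eq_top {K m n : Type*} [Field K] [Fintype m]
    {A : Matrix m n K} (hA : LinearIndependent K A.row) : span K (range A.col) = ⊤ := by
  classical
  by_contra hne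
  obtain ⟨f, hf0, hle⟩ :=
    (span K (range A.col)).exists_le_ker_of_lt_top (lt_top_iff_ne_top.2 hne)
  have hc := Fintype.linearIndependent_iff.1 hA (fun a => f fun j => if a = j then 1 else 0)
    (funext fun j => ?_)
  · exact hf0 (LinearMap.ext fun v => by simp [LinearMap.pi_apply_eq_sum_univ f v, hc])
  have := hle (subset_span ⟨j, rfl⟩)
  rw [LinearMap.mem_ker, LinearMap.pi_apply_eq_sum_univ] at this
  simpa [Matrix.col, Matrix.row, mul_comm] using this

theorem ker_id_add_smul_smulRight_innerₛₗ_eq_bot {E : Type*} [NormedAddCommGroup E]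
    [InnerProductSpace ℝ E] {w : E} (hw : ‖w‖ = 1) {s : ℝ} (hs : 1 + s ≠ 0) :
    LinearMap.ker (LinearMap.id + s • (innerₛₗ ℝ w).smulRight w) = ⊥ := by
  rw [LinearMap.ker_eq_bot']
  intro x hx
  simp only [LinearMap.add_apply, LinearMap.id_apply, LinearMap.smul_apply,
    LinearMap.smulRight_apply, innerₛₗ_apply_apply] at hx
  have hwx : ⟪w, x⟫_ℝ = 0 := by
    have := congrArg (inner ℝ w) hx
    rw [inner_add_right, real_inner_smul_right, real_inner_smul_right, real_inner_self_eq_norm_sq,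
      hw, inner_zero_right] at this
    exact (mul_eq_zero.1 (by linarith : (1 + s) * ⟪w, x⟫_ℝ = 0)).resolve_left hs
  simpa [hwx] using hx

namespace Tucker

section
variable {d : ℕ} {r : Fin d → ℕ}

theorem isUnit_gram_iff {n : ℕ} {f : Fin n → l2N} : IsUnit (gram f) ↔ LinearIndependent ℝ f := by
  change IsUnit (Matrix.gram ℝ f) ↔ _
  rw [← (Matrix.posSemidef_gram ℝ f).posDef_iff_isUnit, Matrix.posDef_gram_iff_linearIndependent]

theorem memℓp_psi (C : Ec d r) (u : ∀ μ : Fin d, Fin (r μ) → l2N) :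
    Memℓp (fun i : Fin d → ℕ =>
      ∑ k : ∀ μ : Fin d, Fin (r μ), C k * ∏ μ, (u μ (k μ) : ℕ → ℝ) (i μ)) 2 :=
  Memℓp.finsetSum _ fun k _ => (memℓp_two_prod fun μ => u μ (k μ)).const_mul (C k)

theorem psi_apply (C : Ec d r) (u : ∀ μ : Fin d, Fin (r μ) → l2N) (i : Fin d → ℕ) :
    Psi d r C u i = ∑ k : ∀ μ : Fin d, Fin (r μ), C k * ∏ μ, (u μ (k μ) : ℕ → ℝ) (i μ) := by
  rw [Psi, dif_pos (memℓp_psi C u)]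

theorem matricize_apply (μ : Fin d) (C : Ec d r) (a : Fin (r μ))
    (b : ∀ ν : {ν : Fin d // ν ≠ μ}, Fin (r ν.1)) :
    matricize d r μ C a b = C ((Equiv.piSplitAt μ fun ν => Fin (r ν)).symm (a, b)) := by
  refine congrArg C (funext fun ν => ?_)
  by_cases h : ν = μ
  · subst h
    simp
  · simp [h]

/-- The matrix `C_(μ) (⊗_{ν ≠ μ} u^ν)ᵀ`: its column at `i'` holds the coordinates, with respect
to `u^μ`, of the mode-`μ` fibre of `Ψ(C, u)` at the multi-index `i'` of the other modes. -/
noncomputable def fiberCoeff (μ : Fin d) (C : Ec d r) (u : ∀ ν : Fin d, Fin (r ν) → l2N) :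
    Matrix (Fin (r μ)) ({ν : Fin d // ν ≠ μ} → ℕ) ℝ :=
  Matrix.of fun a i' => ∑ b, matricize d r μ C a b *
    ∏ ν : {ν : Fin d // ν ≠ μ}, (u ν (b ν) : ℕ → ℝ) (i' ν)

theorem psi_apply_eq_sum_fiberCoeff (μ : Fin d) (C : Ec d r) (u : ∀ ν : Fin d, Fin (r ν) → l2N)
    (i : Fin d → ℕ) :
    Psi d r C u i = ∑ a, (u μ a : ℕ → ℝ) (i μ) * fiberCoeff μ C u a (fun ν => i ν.1) := by
  rw [psi_apply, ← (Equiv.piSplitAt μ fun ν => Fin (r ν)).symm.sum_comp, Fintype.sum_prod_type]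
  refine Fintype.sum_congr _ _ fun a => ?_
  rw [fiberCoeff, Matrix.of_apply, Finset.mul_sum]
  refine Fintype.sum_congr _ _ fun b => ?_
  rw [Fintype.prod_eq_mul_prod_subtype_ne _ μ, matricize_apply]
  simp only [Equiv.piSplitAt_symm_apply_self, Equiv.piSplitAt_symm_apply_coe]
  ring

theorem fiberCoeff_update (μ : Fin d) (C : Ec d r) (u : ∀ ν : Fin d, Fin (r ν) → l2N)
    (v : Fin (r μ) → l2N) : fiberCoeff μ C (Function.update u μ v) = fiberCoeff μ C u := by
  ext a i'
  refine Fintype.sum_congr _ _ fun b => congrArg _ (Fintype.prod_congr _ _ fun ν => ?_)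
  rw [Function.update_of_ne ν.2]

theorem linearIndependent_row_fiberCoeff {μ : Fin d} {C : Ec d r}
    {u : ∀ ν : Fin d, Fin (r ν) → l2N} (hC : (matricize d r μ C).rank = r μ)
    (hu : ∀ ν, LinearIndependent ℝ (u ν)) : LinearIndependent ℝ (fiberCoeff μ C u).row := by
  have hM : LinearIndependent ℝ (matricize d r μ C).row :=
    linearIndependent_iff_card_eq_finrank_span.2 <| by
      rw [Fintype.card_fin]
      exact hC.symm.trans (Matrix.rank_eq_finrank_span_row _)
  have hΦ := LinearIndependent.pi_prod fun ν : {ν : Fin d // ν ≠ μ} =>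
    lp.linearIndependent_coe (hu ν)
  have := hM.map' _ (LinearMap.ker_eq_bot.2
    (linearIndependent_iff_injective_fintypeLinearCombination.1 hΦ))
  have hrow : (fiberCoeff μ C u).row
      = Fintype.linearCombination ℝ (fun b i' => ∏ ν : {ν : Fin d // ν ≠ μ},
          (u ν (b ν) : ℕ → ℝ) (i' ν)) ∘ (matricize d r μ C).row := by
    ext a i'
    rw [Function.comp_apply, Fintype.linearCombination_apply]
    simp [fiberCoeff, Matrix.row]
  rw [hrow]
  exact this

theorem span_range_sum_fiberCoeff_smul {μ : Fin d} {C : Ec d r}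
    {u : ∀ ν : Fin d, Fin (r ν) → l2N} (hC : (matricize d r μ C).rank = r μ)
    (hu : ∀ ν, LinearIndependent ℝ (u ν)) :
    span ℝ (range fun i' => ∑ a, fiberCoeff μ C u a i' • u μ a) = span ℝ (range (u μ)) := by
  have hcol : (fun i' => ∑ a, fiberCoeff μ C u a i' • u μ a)
      = Fintype.linearCombination ℝ (u μ) ∘ (fiberCoeff μ C u).col := by
    funext i'
    rw [Function.comp_apply, Fintype.linearCombination_apply]
    rfl
  rw [hcol, range_comp, span_image, Matrix.span_range_col_eq_top
    (linearIndependent_row_fiberCoeff hC hu), Submodule.map_top, Fintype.range_linearCombination]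

theorem sum_smul_eq_of_forall_sum_mul_eq {μ : Fin d} {α β : Type*} {s : Finset α}
    {t : Finset β} {g : α → l2N} {h : α → ({ν : Fin d // ν ≠ μ} → ℕ) → ℝ} {g' : β → l2N}
    {h' : β → ({ν : Fin d // ν ≠ μ} → ℕ) → ℝ}
    (H : ∀ i : Fin d → ℕ, ∑ k ∈ s, (g k : ℕ → ℝ) (i μ) * h k (fun ν => i ν.1)
      = ∑ k ∈ t, (g' k : ℕ → ℝ) (i μ) * h' k (fun ν => i ν.1))
    (i' : {ν : Fin d // ν ≠ μ} → ℕ) :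
    ∑ k ∈ s, h k i' • g k = ∑ k ∈ t, h' k i' • g' k := by
  refine lp.ext (funext fun n => ?_)
  have := H ((Equiv.piSplitAt μ fun _ => ℕ).symm (n, i'))
  simp only [Equiv.piSplitAt_symm_apply_self, Equiv.piSplitAt_symm_apply_coe] at this
  rw [lp.coeFn_sum, lp.coeFn_sum]
  simpa [mul_comm] using this

theorem le_card_of_mem_Mset {Mc : Set (Ec d r)} (hfull : ∀ C ∈ Mc, fullRank d r C)
    {Y : Hsp d} (hY : Y ∈ Mset d r Mc) {μ : Fin d} {α : Type*} (s : Finset α) (g : α → l2N)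
    (h : α → ({ν : Fin d // ν ≠ μ} → ℕ) → ℝ)
    (hsum : ∀ i : Fin d → ℕ, Y i = ∑ k ∈ s, (g k : ℕ → ℝ) (i μ) * h k (fun ν => i ν.1)) :
    r μ ≤ s.card := by
  classical
  obtain ⟨C, hC, u, hu, rfl⟩ := hY
  simp_rw [isUnit_gram_iff] at hu
  have hle : span ℝ (range (u μ)) ≤ span ℝ (s.image g : Set l2N) := by
    rw [← span_range_sum_fiberCoeff_smul (hfull C hC μ) hu, span_le]
    rintro _ ⟨i', rfl⟩
    dsimp only
    rw [sum_smul_eq_of_forall_sum_mul_eq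
      (fun i => (psi_apply_eq_sum_fiberCoeff μ C u i).symm.trans (hsum i)) i']
    exact sum_mem fun k hk => smul_mem _ _ (subset_span (Finset.mem_image_of_mem g hk))
  calc r μ = Module.finrank ℝ (span ℝ (range (u μ))) := by
        rw [finrank_span_eq_card (hu μ), Fintype.card_fin]
    _ ≤ Module.finrank ℝ (span ℝ (s.image g : Set l2N)) := Submodule.finrank_mono hle
    _ ≤ (s.image g).card := finrank_span_finset_le_card _
    _ ≤ s.card := Finset.card_image_le

theorem add_smul_lpTensor_mem_Mset {Mc : Set (Ec d r)} {X : Hsp d} (hX : X ∈ Mset d r Mc)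
    {μ : Fin d} {w : Fin (r μ) → l2N} (hw : Orthonormal ℝ w) {z : Fin (r μ) → l2C d μ}
    (hdecomp : ∀ i : Fin d → ℕ,
      X i = ∑ k, (w k : ℕ → ℝ) (i μ) * (z k : ({ν : Fin d // ν ≠ μ} → ℕ) → ℝ) (fun ν => i ν.1))
    (k₀ : Fin (r μ)) {s : ℝ} (hs : 1 + s ≠ 0) :
    X + s • lpTensor (Equiv.piSplitAt μ fun _ => ℕ) (w k₀) (z k₀) ∈ Mset d r Mc := by
  obtain ⟨C, hC, u, hu, rfl⟩ := hX
  set A : l2N →ₗ[ℝ] l2N := LinearMap.id + s • (innerₛₗ ℝ (w k₀)).smulRight (w k₀)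
  refine ⟨C, hC, Function.update u μ fun a => A (u μ a), fun ν => ?_, ?_⟩
  · simp_rw [isUnit_gram_iff] at hu ⊢
    rcases eq_or_ne ν μ with rfl | hν
    · rw [Function.update_self]
      exact (hu ν).map' A (ker_id_add_smul_smulRight_innerₛₗ_eq_bot (hw.1 k₀) hs)
    · rw [Function.update_of_ne hν]
      exact hu ν
  have hfiber := sum_smul_eq_of_forall_sum_mul_eq
    (fun i => (psi_apply_eq_sum_fiberCoeff μ C u i).symm.trans (hdecomp i))
  refine (lp.ext (funext fun i => ?_)).symm
  calc (Psi d r C (Function.update u μ fun a => A (u μ a)) : (Fin d → ℕ) → ℝ) i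
      = A (∑ a, fiberCoeff μ C u a (fun ν => i ν.1) • u μ a) (i μ) := by
        simp only [psi_apply_eq_sum_fiberCoeff μ, fiberCoeff_update, Function.update_self,
          map_sum, map_smul, lp.coeFn_sum_smul_apply, mul_comm]
    _ = A (∑ k, (z k : _ → ℝ) (fun ν => i ν.1) • w k) (i μ) := by rw [hfiber]
    _ = _ := by
        simp only [A, LinearMap.add_apply, LinearMap.id_apply, LinearMap.smul_apply,
          LinearMap.smulRight_apply, innerₛₗ_apply_apply, hw.inner_right_fintype, lp.coeFn_add,
          lp.coeFn_smul, Pi.add_apply, Pi.smul_apply, smul_eq_mul, lp.coeFn_sum_smul_apply,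
          hdecomp i, lpTensor_apply, Equiv.piSplitAt_apply]
        simp only [mul_comm]

theorem closure_subset_weakClosure (S : Set (Hsp d)) : closure S ⊆ weakClosure d S :=
  closure_subset_preimage_closure_image (toWeakSpaceCLM ℝ (Hsp d)).continuous

end

variable (d : ℕ) (r : Fin d → ℕ)

theorem stmt11 (Mc : Set (Ec d r))
    (hfull : ∀ C ∈ Mc, fullRank d r C)
    (X : Hsp d) (hX : X ∈ Mset d r Mc) (μ : Fin d)
    (w : Fin (r μ) → l2N) (hw : Orthonormal ℝ w)
    (z : Fin (r μ) → l2C d μ)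
    (hdecomp : ∀ i : Fin d → ℕ,
      (X : ∀ _ : Fin d → ℕ, ℝ) i
        = ∑ k, (w k : ℕ → ℝ) (i μ)
            * (z k : ({ν : Fin d // ν ≠ μ} → ℕ) → ℝ) (fun ν => i ν.1))
    (k₀ : Fin (r μ)) (Xt : Hsp d)
    (hXt : ∀ i : Fin d → ℕ,
      (Xt : ∀ _ : Fin d → ℕ, ℝ) i
        = ∑ k ∈ Finset.univ.erase k₀, (w k : ℕ → ℝ) (i μ)
            * (z k : ({ν : Fin d // ν ≠ μ} → ℕ) → ℝ) (fun ν => i ν.1)) :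
    ‖X - Xt‖ = ‖z k₀‖ ∧ Xt ∈ weakClosure d (Mset d r Mc) ∧ Xt ∉ Mset d r Mc := by
  have hXE : X - Xt = lpTensor (Equiv.piSplitAt μ fun _ => ℕ) (w k₀) (z k₀) :=
    lp.ext <| funext fun i => by simp [hdecomp i, hXt i, Finset.sum_erase_eq_sub]
  refine ⟨by rw [hXE, norm_lpTensor, hw.1 k₀, one_mul], ?_, fun hXtM => ?_⟩
  · have hmem : ∀ t ≠ (0 : ℝ), Xt + t • (X - Xt) ∈ Mset d r Mc := fun t ht => by
      convert add_smul_lpTensor_mem_Mset hX hw hdecomp k₀ (s := t - 1) (by simpa using ht) using 1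
      rw [← hXE]
      module
    have hlim : Filter.Tendsto (fun t : ℝ => Xt + t • (X - Xt)) (nhdsWithin 0 {0}ᶜ) (nhds Xt) :=
      tendsto_nhdsWithin_of_tendsto_nhds <|
        (show Continuous fun t : ℝ => Xt + t • (X - Xt) by fun_prop).tendsto' 0 Xt (by simp)
    exact closure_subset_weakClosure _
      (mem_closure_of_tendsto hlim (eventually_nhdsWithin_of_forall hmem))
  · have := le_card_of_mem_Mset hfull hXtM _ _ _ hXt
    rw [Finset.card_erase_of_mem (Finset.mem_univ k₀), Finset.card_univ, Fintype.card_fin] at this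
    have := k₀.pos
    omega

end Tucker
end
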